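/- arXiv:2306.06263 — 6 statements merged into one kernel-verified Lean document; each statement's English description precedes it below -/
import Mathlib

section
/- If α_z ≠ 0 and Var(ε_d) > 0, then Var(D) − (α_d/α_z)·Cov(D, Z) = Var(ε_d) > 0 and the causal coefficient satisfies β = (Cov(D, Y) − (α_d/α_z)·Cov(Y, Z)) / (Var(D) − (α_d/α_z)·Cov(D, Z)). -/
open MeasureTheory ProbabilityTheory

/-- Covariance of two real random variables. -/
noncomputable def cov {Ω : Type*} [MeasurableSpace Ω] (μ : Measure Ω) (X Y : Ω → ℝ) : ℝ :=
  ∫ ω, (X ω - ∫ x, X x ∂μ) * (Y ω - ∫ x, Y x ∂μ) ∂μ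

/-!
Everything is bilinear in the errors, and independence makes them pairwise uncorrelated, so with
`σu² = Var ε_u` and `σd² = Var ε_d`:
`Var D = α_d² σu² + σd²`, `Cov(D,Z) = α_d α_z σu²`, `Cov(D,Y) = β Var D + γ α_d σu²` and
`Cov(Y,Z) = β Cov(D,Z) + γ α_z σu²`.
Subtracting `α_d/α_z` times the `Z`-covariances removes every `σu²` term, which leaves
`σd²` in the denominator and `β σd²` in the numerator.
-/

namespace ProbabilityTheory

variable {Ω ι : Type*} [MeasurableSpace Ω] {μ : Measure Ω}

lemma cov_eq_covariance (X Y : Ω → ℝ) : cov μ X Y = cov[X, Y; μ] := rfl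

lemma iIndepFun.pairwise_covariance_eq_zero {e : ι → Ω → ℝ} (hind : iIndepFun e μ)
    (he : ∀ i, MemLp (e i) 2 μ) : Pairwise fun i j ↦ cov[e i, e j; μ] = 0 :=
  fun _ _ hij ↦ (hind.indepFun hij).covariance_eq_zero (he _) (he _)

lemma covariance_sum_mul_sum_of_pairwise_uncorrelated [IsFiniteMeasure μ] [Fintype ι]
    {e : ι → Ω → ℝ} (he : ∀ i, MemLp (e i) 2 μ)
    (hunc : Pairwise fun i j ↦ cov[e i, e j; μ] = 0) (a b : ι → ℝ) :
    cov[fun ω ↦ ∑ i, a i * e i ω, fun ω ↦ ∑ j, b j * e j ω; μ] = ∑ i, a i * b i * Var[e i; μ] := by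
  have hterm : ∀ i j, cov[fun ω ↦ a i * e i ω, fun ω ↦ b j * e j ω; μ]
      = a i * b j * cov[e i, e j; μ] := fun i j ↦ by
    rw [covariance_const_mul_left, covariance_const_mul_right, mul_assoc]
  rw [covariance_fun_sum_fun_sum (fun i ↦ (he i).const_mul (a i)) fun j ↦ (he j).const_mul (b j)]
  refine Finset.sum_congr rfl fun i _ ↦ ?_
  rw [Finset.sum_eq_single i (fun j _ hji ↦ by rw [hterm, hunc hji.symm, mul_zero]) (by simp),
    hterm, covariance_self (he i).aestronglyMeasurable.aemeasurable]

lemma variance_sum_mul_of_pairwise_uncorrelated [IsFiniteMeasure μ] [Fintype ι]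
    {e : ι → Ω → ℝ} (he : ∀ i, MemLp (e i) 2 μ)
    (hunc : Pairwise fun i j ↦ cov[e i, e j; μ] = 0) (a : ι → ℝ) :
    Var[fun ω ↦ ∑ i, a i * e i ω; μ] = ∑ i, a i ^ 2 * Var[e i; μ] := by
  have hsum : MemLp (fun ω ↦ ∑ i, a i * e i ω) 2 μ :=
    memLp_finsetSum _ fun i _ ↦ (he i).const_mul (a i)
  simp only [← covariance_self hsum.aestronglyMeasurable.aemeasurable,
    covariance_sum_mul_sum_of_pairwise_uncorrelated he hunc, sq]

end ProbabilityTheory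

theorem beta_from_cross_moments_general
    {Ω : Type*} [MeasurableSpace Ω] {μ : MeasureTheory.Measure Ω}
    [MeasureTheory.IsProbabilityMeasure μ]
    (εu εz εd εy : Ω → ℝ)
    (hind : ProbabilityTheory.iIndepFun ![εu, εz, εd, εy] μ)
    (hLu : ∀ n : ℕ, MeasureTheory.MemLp εu n μ) (hLz : ∀ n : ℕ, MeasureTheory.MemLp εz n μ)
    (hLd : ∀ n : ℕ, MeasureTheory.MemLp εd n μ) (hLy : ∀ n : ℕ, MeasureTheory.MemLp εy n μ)
    (αz αd β γ : ℝ) (Z D Y : Ω → ℝ)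
    (hZ : ∀ ω, Z ω = αz * εu ω + εz ω)
    (hD : ∀ ω, D ω = αd * εu ω + εd ω)
    (hY : ∀ ω, Y ω = β * D ω + γ * εu ω + εy ω)
    (hαz : αz ≠ 0) (hvard : 0 < variance εd μ) :
    variance D μ - (αd / αz) * cov μ D Z = variance εd μ ∧
    0 < variance D μ - (αd / αz) * cov μ D Z ∧
    β = (cov μ D Y - (αd / αz) * cov μ Y Z) /
        (variance D μ - (αd / αz) * cov μ D Z) := by
  set e : Fin 4 → Ω → ℝ := ![εu, εz, εd, εy]
  have he : ∀ i, MemLp (e i) 2 μ := by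
    simpa [e, Fin.forall_fin_succ] using ⟨hLu 2, hLz 2, hLd 2, hLy 2⟩
  have hunc := hind.pairwise_covariance_eq_zero he
  have hcov := covariance_sum_mul_sum_of_pairwise_uncorrelated he hunc
  have hZe : Z = fun ω ↦ ∑ i, ![αz, 1, 0, 0] i * e i ω := by
    funext ω; simp [e, hZ, Fin.sum_univ_four]
  have hDe : D = fun ω ↦ ∑ i, ![αd, 0, 1, 0] i * e i ω := by
    funext ω; simp [e, hD, Fin.sum_univ_four]
  have hYe : Y = fun ω ↦ ∑ i, ![β * αd + γ, 0, β, 1] i * e i ω := by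
    funext ω; simp [e, hY, hD, Fin.sum_univ_four]; ring
  have hVarD : Var[D; μ] = αd ^ 2 * Var[εu; μ] + Var[εd; μ] := by
    rw [hDe, variance_sum_mul_of_pairwise_uncorrelated he hunc]; simp [e, Fin.sum_univ_four]
  have hDZ : cov μ D Z = αd * αz * Var[εu; μ] := by
    rw [cov_eq_covariance, hDe, hZe, hcov]; simp [e, Fin.sum_univ_four]
  have hDY : cov μ D Y = αd * (β * αd + γ) * Var[εu; μ] + β * Var[εd; μ] := by
    rw [cov_eq_covariance, hDe, hYe, hcov]; simp [e, Fin.sum_univ_four]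
  have hYZ : cov μ Y Z = (β * αd + γ) * αz * Var[εu; μ] := by
    rw [cov_eq_covariance, hYe, hZe, hcov]; simp [e, Fin.sum_univ_four]
  have hden : Var[D; μ] - αd / αz * cov μ D Z = Var[εd; μ] := by
    rw [hVarD, hDZ]; field_simp; ring
  refine ⟨hden, hden ▸ hvard, ?_⟩
  rw [hden, hDY, hYZ]
  field_simp
  ring

/-- If α_z ≠ 0 and Var(ε_d) > 0 then
    Var(D) − (α_d/α_z)·Cov(D,Z) = Var(ε_d) > 0 and
    β = (Cov(D,Y) − (α_d/α_z)·Cov(Y,Z)) / (Var(D) − (α_d/α_z)·Cov(D,Z)). -/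
theorem beta_from_cross_moments
    {Ω : Type*} [MeasurableSpace Ω] {μ : MeasureTheory.Measure Ω}
    [MeasureTheory.IsProbabilityMeasure μ]
    (εu εz εd εy : Ω → ℝ)
    (hmu : Measurable εu) (hmz : Measurable εz) (hmd : Measurable εd) (hmy : Measurable εy)
    (hind : ProbabilityTheory.iIndepFun ![εu, εz, εd, εy] μ)
    (h0u : ∫ ω, εu ω ∂μ = 0) (h0z : ∫ ω, εz ω ∂μ = 0)
    (h0d : ∫ ω, εd ω ∂μ = 0) (h0y : ∫ ω, εy ω ∂μ = 0)
    (hLu : ∀ n : ℕ, MeasureTheory.MemLp εu n μ) (hLz : ∀ n : ℕ, MeasureTheory.MemLp εz n μ)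
    (hLd : ∀ n : ℕ, MeasureTheory.MemLp εd n μ) (hLy : ∀ n : ℕ, MeasureTheory.MemLp εy n μ)
    (αz αd β γ : ℝ) (Z D Y : Ω → ℝ)
    (hZ : ∀ ω, Z ω = αz * εu ω + εz ω)
    (hD : ∀ ω, D ω = αd * εu ω + εd ω)
    (hY : ∀ ω, Y ω = β * D ω + γ * εu ω + εy ω)
    (hαz : αz ≠ 0) (hvard : 0 < variance εd μ) :
    variance D μ - (αd / αz) * cov μ D Z = variance εd μ ∧
    0 < variance D μ - (αd / αz) * cov μ D Z ∧
    β = (cov μ D Y - (αd / αz) * cov μ Y Z) /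
        (variance D μ - (αd / αz) * cov μ D Z) :=
  beta_from_cross_moments_general εu εz εd εy hind hLu hLz hLd hLy αz αd β γ Z D Y hZ hD hY hαz
    hvard
end

section
/- Let n ≥ 3 be an integer and assume that E[ε_u^m] = (m−1)·E[ε_u^{m−2}]·E[ε_u²] holds for every integer m with 3 ≤ m < n. Then E[D^{n−1}·Z] − (n−1)·E[D·Z]·E[D^{n−2}] = α_d^{n−1}·α_z·( E[ε_u^n] − (n−1)·E[ε_u^{n−2}]·E[ε_u²] ). -/
/-!
Since `εz` is centred and independent of `(εu, εd)`, `𝔼[D ^ k Z] = αz 𝔼[D ^ k εu]`. With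
`n = N + 2`, expanding `D = αd εu + εd` binomially and using `εu ⟂ εd` gives
`𝔼[D ^ (N + 1) εu] = ∑ₖ C(N + 1, k) αd ^ k 𝔼[εu ^ (k + 1)] 𝔼[εd ^ (N + 1 - k)]`.
Write `𝔼[εu ^ (k + 1)] = k 𝔼[εu ^ (k - 1)] 𝔼[εu ^ 2] + κ (k + 1)`, where
`κ = gaussianMomentDefect` measures the failure of the Gaussian (Stein) moment recursion.
Since `(k + 1) C(N + 1, k + 1) = (N + 1) C(N, k)`, the recursive parts reassemble into
`(N + 1) αd 𝔼[εu ^ 2] 𝔼[D ^ N] = (N + 1) 𝔼[D εu] 𝔼[D ^ N]`. The defects `κ 1 = 𝔼[εu]`, `κ 2`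
and, by hypothesis, `κ m` for `3 ≤ m ≤ N + 1` all vanish, which leaves only the top term
`αd ^ (N + 1) κ (N + 2)`.
-/

open MeasureTheory ProbabilityTheory Finset

def gaussianMomentDefect {R : Type*} [CommRing R] (u : ℕ → R) (m : ℕ) : R :=
  u m - ((m : R) - 1) * u (m - 2) * u 2

section Algebra

variable {R : Type*} [CommRing R]

theorem gaussianMomentDefect_one (u : ℕ → R) : gaussianMomentDefect u 1 = u 1 := by
  simp [gaussianMomentDefect]

theorem gaussianMomentDefect_two {u : ℕ → R} (h0 : u 0 = 1) : gaussianMomentDefect u 2 = 0 := by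
  norm_num [gaussianMomentDefect, h0]

theorem add_pow_mul_pow_eq_sum (a x y : R) (N j : ℕ) :
    (a * x + y) ^ N * x ^ j =
      ∑ k ∈ range (N + 1), (N.choose k : R) * a ^ k * (x ^ (k + j) * y ^ (N - k)) := by
  rw [add_pow, sum_mul]
  refine sum_congr rfl fun k _ => ?_
  rw [mul_pow, pow_add]
  ring

theorem sum_choose_mul_succ_eq (u v : ℕ → R) (a : R) (N : ℕ) :
    ∑ k ∈ range (N + 2), ((N + 1).choose k : R) * a ^ k * (u (k + 1) * v (N + 1 - k)) =
      (N + 1) * a * u 2 * ∑ k ∈ range (N + 1), (N.choose k : R) * a ^ k * (u k * v (N - k)) +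
      ∑ k ∈ range (N + 2), ((N + 1).choose k : R) * a ^ k *
        (gaussianMomentDefect u (k + 1) * v (N + 1 - k)) := by
  have hu : ∀ k, u (k + 1) = k * u (k - 1) * u 2 + gaussianMomentDefect u (k + 1) := by
    intro k
    simp only [gaussianMomentDefect, Nat.cast_add, Nat.cast_one, add_sub_cancel_right,
      show k + 1 - 2 = k - 1 by omega]
    ring
  have hchoose : ∀ k, ((N + 1).choose (k + 1) : R) * (k + 1) = (N + 1) * N.choose k := by
    intro k
    have h := congrArg (Nat.cast : ℕ → R) (Nat.add_one_mul_choose_eq N k)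
    push_cast at h
    exact h.symm
  rw [sum_congr rfl fun k _ => by rw [hu k, add_mul, mul_add], sum_add_distrib]
  congr 1
  rw [sum_range_succ', mul_sum]
  simp only [Nat.cast_zero, zero_mul, mul_zero, add_zero, Nat.cast_add, Nat.cast_one,
    add_tsub_cancel_right, Nat.add_sub_add_right]
  refine sum_congr rfl fun k _ => ?_
  linear_combination a ^ (k + 1) * u k * u 2 * v (N - k) * hchoose k

theorem sum_choose_mul_gaussianMomentDefect_eq {u : ℕ → R} (v : ℕ → R) (a : R) {N : ℕ}
    (h0 : u 0 = 1) (h1 : u 1 = 0)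
    (hrec : ∀ m, 3 ≤ m → m ≤ N + 1 → gaussianMomentDefect u m = 0) :
    ∑ k ∈ range (N + 2), ((N + 1).choose k : R) * a ^ k *
        (gaussianMomentDefect u (k + 1) * v (N + 1 - k)) =
      a ^ (N + 1) * (gaussianMomentDefect u (N + 2) * v 0) := by
  rw [sum_range_succ, sum_eq_zero, zero_add]
  · simp
  intro k hk
  obtain _ | _ | m := k
  · simp [gaussianMomentDefect_one, h1]
  · simp [gaussianMomentDefect_two h0]
  · rw [hrec (m + 3) (by omega) (by rw [mem_range] at hk; omega)]
    ring

end Algebra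

section Moments

variable {Ω : Type*} [MeasurableSpace Ω] {μ : Measure Ω} {U V : Ω → ℝ}

theorem MeasureTheory.MemLp.integrable_pow [IsFiniteMeasure μ] {f : Ω → ℝ} {k : ℕ}
    (hf : MemLp f k μ) :
    Integrable (fun ω => f ω ^ k) μ :=
  hf.integrable_norm_pow'.mono' (hf.1.pow k) (ae_of_all _ fun ω => by simp [norm_pow])

namespace ProbabilityTheory.IndepFun

theorem integral_pow_mul_pow (hUV : IndepFun U V μ) (hU : AEStronglyMeasurable U μ)
    (hV : AEStronglyMeasurable V μ) (i j : ℕ) :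
    ∫ ω, U ω ^ i * V ω ^ j ∂μ = moment U i μ * moment V j μ :=
  (hUV.comp (measurable_id.pow_const i)
    (measurable_id.pow_const j)).integral_fun_mul_eq_mul_integral (hU.pow i) (hV.pow j)

theorem integral_mul_mul_add_of_integral_eq_zero {X W : Ω → ℝ} (hXW : IndepFun X W μ)
    (hX : Integrable X μ) (hXU : Integrable (fun ω => X ω * U ω) μ) (hW : Integrable W μ)
    (hW0 : ∫ ω, W ω ∂μ = 0) (c : ℝ) :
    ∫ ω, X ω * (c * U ω + W ω) ∂μ = c * ∫ ω, X ω * U ω ∂μ := by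
  have hXW0 : ∫ ω, X ω * W ω ∂μ = 0 := by
    rw [hXW.integral_fun_mul_eq_mul_integral hX.1 hW.1, hW0, mul_zero]
  simp_rw [mul_add, mul_left_comm (X _) c]
  have hXW' : Integrable (fun ω => X ω * W ω) μ := hXW.integrable_mul hX hW
  rw [integral_add (hXU.const_mul c) hXW', integral_const_mul, hXW0, add_zero]

section FiniteMeasure

variable [IsFiniteMeasure μ]

theorem integrable_pow_mul_pow (hUV : IndepFun U V μ) (hU : ∀ k : ℕ, MemLp U k μ)
    (hV : ∀ k : ℕ, MemLp V k μ) (i j : ℕ) : Integrable (fun ω => U ω ^ i * V ω ^ j) μ :=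
  (hUV.comp (measurable_id.pow_const i) (measurable_id.pow_const j)).integrable_mul
    (hU i).integrable_pow (hV j).integrable_pow

theorem integrable_add_pow_mul_pow (hUV : IndepFun U V μ) (hU : ∀ k : ℕ, MemLp U k μ)
    (hV : ∀ k : ℕ, MemLp V k μ) (a : ℝ) (N j : ℕ) :
    Integrable (fun ω => (a * U ω + V ω) ^ N * U ω ^ j) μ := by
  simp_rw [add_pow_mul_pow_eq_sum]
  exact integrable_finsetSum _ fun k _ =>
    (hUV.integrable_pow_mul_pow hU hV (k + j) (N - k)).const_mul _

theorem integral_add_pow_mul_pow (hUV : IndepFun U V μ) (hU : ∀ k : ℕ, MemLp U k μ)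
    (hV : ∀ k : ℕ, MemLp V k μ) (a : ℝ) (N j : ℕ) :
    ∫ ω, (a * U ω + V ω) ^ N * U ω ^ j ∂μ =
      ∑ k ∈ range (N + 1),
        (N.choose k : ℝ) * a ^ k * (moment U (k + j) μ * moment V (N - k) μ) := by
  simp_rw [add_pow_mul_pow_eq_sum]
  rw [integral_finsetSum _ fun k _ =>
    (hUV.integrable_pow_mul_pow hU hV (k + j) (N - k)).const_mul _]
  refine sum_congr rfl fun k _ => ?_
  rw [integral_const_mul, hUV.integral_pow_mul_pow (hU 0).1 (hV 0).1]

end FiniteMeasure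

theorem integral_add_pow_succ_mul_sub [IsProbabilityMeasure μ] (hUV : IndepFun U V μ)
    (hU : ∀ k : ℕ, MemLp U k μ) (hV : ∀ k : ℕ, MemLp V k μ) (hU1 : ∫ ω, U ω ∂μ = 0)
    (a : ℝ) {N : ℕ}
    (hrec : ∀ m, 3 ≤ m → m ≤ N + 1 → gaussianMomentDefect (moment U · μ) m = 0) :
    (∫ ω, (a * U ω + V ω) ^ (N + 1) * U ω ∂μ) -
        (N + 1) * (∫ ω, (a * U ω + V ω) * U ω ∂μ) * ∫ ω, (a * U ω + V ω) ^ N ∂μ =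
      a ^ (N + 1) * gaussianMomentDefect (moment U · μ) (N + 2) := by
  have hU0 : moment U 0 μ = 1 := by simp [moment]
  have hV0 : moment V 0 μ = 1 := by simp [moment]
  have hU1' : moment U 1 μ = 0 := by simpa [moment] using hU1
  have hDU : ∀ M, ∫ ω, (a * U ω + V ω) ^ M * U ω ∂μ =
      ∑ k ∈ range (M + 1),
        (M.choose k : ℝ) * a ^ k * (moment U (k + 1) μ * moment V (M - k) μ) :=
    fun M => by simpa using hUV.integral_add_pow_mul_pow hU hV a M 1
  have hDN : ∫ ω, (a * U ω + V ω) ^ N ∂μ =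
      ∑ k ∈ range (N + 1), (N.choose k : ℝ) * a ^ k * (moment U k μ * moment V (N - k) μ) := by
    simpa using hUV.integral_add_pow_mul_pow hU hV a N 0
  have hD1 : ∫ ω, (a * U ω + V ω) * U ω ∂μ = a * moment U 2 μ := by
    simpa [sum_range_succ, hU1', hV0] using hDU 1
  have hsplit := sum_choose_mul_succ_eq (moment U · μ) (moment V · μ) a N
  have hcollapse := sum_choose_mul_gaussianMomentDefect_eq (moment V · μ) a hU0 hU1' hrec
  rw [hDU, hDN, hD1, show N + 1 + 1 = N + 2 from rfl, hsplit, hcollapse, hV0]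
  ring

end ProbabilityTheory.IndepFun

end Moments

theorem cross_moment_identity_D_general
    {Ω : Type*} [MeasurableSpace Ω] {μ : MeasureTheory.Measure Ω}
    [MeasureTheory.IsProbabilityMeasure μ]
    (εu εz εd εy : Ω → ℝ)
    (hind : ProbabilityTheory.iIndepFun ![εu, εz, εd, εy] μ)
    (h0u : ∫ ω, εu ω ∂μ = 0) (h0z : ∫ ω, εz ω ∂μ = 0)
    (hLu : ∀ n : ℕ, MeasureTheory.MemLp εu n μ) (hLz : ∀ n : ℕ, MeasureTheory.MemLp εz n μ)
    (hLd : ∀ n : ℕ, MeasureTheory.MemLp εd n μ) (hLy : ∀ n : ℕ, MeasureTheory.MemLp εy n μ)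
    (αz αd : ℝ) (Z D : Ω → ℝ)
    (hZ : ∀ ω, Z ω = αz * εu ω + εz ω)
    (hD : ∀ ω, D ω = αd * εu ω + εd ω)
    (n : ℕ) (hn : 3 ≤ n)
    (hrec : ∀ m : ℕ, 3 ≤ m → m < n →
      ∫ ω, εu ω ^ m ∂μ =
        ((m : ℝ) - 1) * (∫ ω, εu ω ^ (m - 2) ∂μ) * ∫ ω, εu ω ^ 2 ∂μ) :
    (∫ ω, D ω ^ (n - 1) * Z ω ∂μ) -
      ((n : ℝ) - 1) * (∫ ω, D ω * Z ω ∂μ) * (∫ ω, D ω ^ (n - 2) ∂μ) =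
    αd ^ (n - 1) * αz *
      ((∫ ω, εu ω ^ n ∂μ) -
        ((n : ℝ) - 1) * (∫ ω, εu ω ^ (n - 2) ∂μ) * ∫ ω, εu ω ^ 2 ∂μ) := by
  obtain ⟨N, rfl⟩ : ∃ N, n = N + 2 := ⟨n - 2, by omega⟩
  have hmeas : ∀ i, AEMeasurable (![εu, εz, εd, εy] i) μ := by
    intro i
    fin_cases i
    exacts [(hLu 0).1.aemeasurable, (hLz 0).1.aemeasurable, (hLd 0).1.aemeasurable,
      (hLy 0).1.aemeasurable]
  have hud : IndepFun εu εd μ := hind.indepFun (show (0 : Fin 4) ≠ 2 by decide)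
  have hudz : IndepFun (fun ω => (εu ω, εd ω)) εz μ :=
    hind.indepFun_prodMk₀ hmeas 0 2 1 (by decide) (by decide)
  have hDkz : ∀ k, IndepFun (fun ω => (αd * εu ω + εd ω) ^ k) εz μ := fun k =>
    hudz.comp (φ := fun p : ℝ × ℝ => (αd * p.1 + p.2) ^ k) (by fun_prop) measurable_id
  have hDZ : ∀ k, ∫ ω, (αd * εu ω + εd ω) ^ k * (αz * εu ω + εz ω) ∂μ =
      αz * ∫ ω, (αd * εu ω + εd ω) ^ k * εu ω ∂μ := fun k =>
    (hDkz k).integral_mul_mul_add_of_integral_eq_zero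
      (by simpa using hud.integrable_add_pow_mul_pow hLu hLd αd k 0)
      (by simpa using hud.integrable_add_pow_mul_pow hLu hLd αd k 1)
      ((hLz 1).integrable (by norm_num)) h0z αz
  have hDZ₁ := hDZ 1
  simp only [pow_one] at hDZ₁
  have key := hud.integral_add_pow_succ_mul_sub hLu hLd h0u αd (N := N)
    fun m h3 hm => sub_eq_zero.mpr (hrec m h3 (by omega))
  change _ = αd ^ (N + 1) * αz * gaussianMomentDefect (moment εu · μ) (N + 2)
  simp only [hD, hZ, show N + 2 - 1 = N + 1 from rfl, show N + 2 - 2 = N from rfl, hDZ, hDZ₁]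
  push_cast
  linear_combination αz * key

/-- Under the moment recursion for all 3 ≤ m < n,
    E[D^{n−1}Z] − (n−1)E[DZ]E[D^{n−2}]
      = α_d^{n−1}·α_z·(E[ε_u^n] − (n−1)E[ε_u^{n−2}]E[ε_u²]). -/
theorem cross_moment_identity_D
    {Ω : Type*} [MeasurableSpace Ω] {μ : MeasureTheory.Measure Ω}
    [MeasureTheory.IsProbabilityMeasure μ]
    (εu εz εd εy : Ω → ℝ)
    (hmu : Measurable εu) (hmz : Measurable εz) (hmd : Measurable εd) (hmy : Measurable εy)
    (hind : ProbabilityTheory.iIndepFun ![εu, εz, εd, εy] μ)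
    (h0u : ∫ ω, εu ω ∂μ = 0) (h0z : ∫ ω, εz ω ∂μ = 0)
    (h0d : ∫ ω, εd ω ∂μ = 0) (h0y : ∫ ω, εy ω ∂μ = 0)
    (hLu : ∀ n : ℕ, MeasureTheory.MemLp εu n μ) (hLz : ∀ n : ℕ, MeasureTheory.MemLp εz n μ)
    (hLd : ∀ n : ℕ, MeasureTheory.MemLp εd n μ) (hLy : ∀ n : ℕ, MeasureTheory.MemLp εy n μ)
    (αz αd β γ : ℝ) (Z D Y : Ω → ℝ)
    (hZ : ∀ ω, Z ω = αz * εu ω + εz ω)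
    (hD : ∀ ω, D ω = αd * εu ω + εd ω)
    (hY : ∀ ω, Y ω = β * D ω + γ * εu ω + εy ω)
    (n : ℕ) (hn : 3 ≤ n)
    (hrec : ∀ m : ℕ, 3 ≤ m → m < n →
      ∫ ω, εu ω ^ m ∂μ =
        ((m : ℝ) - 1) * (∫ ω, εu ω ^ (m - 2) ∂μ) * ∫ ω, εu ω ^ 2 ∂μ) :
    (∫ ω, D ω ^ (n - 1) * Z ω ∂μ) -
      ((n : ℝ) - 1) * (∫ ω, D ω * Z ω ∂μ) * (∫ ω, D ω ^ (n - 2) ∂μ) =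
    αd ^ (n - 1) * αz *
      ((∫ ω, εu ω ^ n ∂μ) -
        ((n : ℝ) - 1) * (∫ ω, εu ω ^ (n - 2) ∂μ) * ∫ ω, εu ω ^ 2 ∂μ) :=
  cross_moment_identity_D_general εu εz εd εy hind h0u h0z hLu hLz hLd hLy αz αd Z D hZ hD n hn hrec
end

section
/- (Theorem 1, algorithmic form.) Assume E[ε_u²] > 0, α_d ≠ 0 and α_z ≠ 0, and let n ≥ 3 be the smallest integer such that E[ε_u^n] ≠ (n−1)·E[ε_u^{n−2}]·E[ε_u²]. With num = E[D^{n−1}·Z] − (n−1)·E[D·Z]·E[D^{n−2}] and den = E[Z^{n−1}·D] − (n−1)·E[D·Z]·E[Z^{n−2}], one has α_d/α_z = sign(E[D·Z]) · |num/den|^{1/(n−2)}. -/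
open MeasureTheory ProbabilityTheory

section Aux

variable {Ω : Type*} [MeasurableSpace Ω] {μ : Measure Ω} [IsProbabilityMeasure μ]

lemma aux_int_pow {f : Ω → ℝ} (hm : Measurable f) (hL : ∀ n : ℕ, MemLp f n μ)
    (a : ℕ) : Integrable (fun ω => f ω ^ a) μ := by
  rcases Nat.eq_zero_or_pos a with h | h
  · simp only [h, pow_zero]; exact integrable_const 1
  · have hnr : MemLp (fun ω => ‖f ω‖ ^ (a : ℝ)) 1 μ := by
      refine ⟨(hm.norm.pow_const a).aestronglyMeasurable.congr ?_, ?_⟩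
      · filter_upwards with ω
        rw [Real.rpow_natCast]
      · rw [eLpNorm_norm_rpow f (by positivity)]
        refine ENNReal.rpow_lt_top_of_nonneg (by positivity) ?_
        have := (hL a).2
        rw [one_mul]
        rw [ENNReal.ofReal_natCast]
        exact this.ne
    have h2 := memLp_one_iff_integrable.mp hnr
    refine h2.mono' (hm.pow_const a).aestronglyMeasurable ?_
    filter_upwards with ω
    exact le_of_eq (by simp [Real.rpow_natCast, Real.norm_eq_abs, abs_pow])

lemma aux_triple_int
    {X Y W : Ω → ℝ}
    (hXY : IndepFun X Y μ) (hXYW : IndepFun (fun ω => (X ω, Y ω)) W μ)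
    (hiX : ∀ a : ℕ, Integrable (fun ω => X ω ^ a) μ)
    (hiY : ∀ a : ℕ, Integrable (fun ω => Y ω ^ a) μ)
    (hiW : ∀ a : ℕ, Integrable (fun ω => W ω ^ a) μ)
    (a b c : ℕ) :
    Integrable (fun ω => X ω ^ a * Y ω ^ b * W ω ^ c) μ ∧
    ∫ ω, X ω ^ a * Y ω ^ b * W ω ^ c ∂μ =
      (∫ ω, X ω ^ a ∂μ) * (∫ ω, Y ω ^ b ∂μ) * (∫ ω, W ω ^ c ∂μ) := by
  have h1 : IndepFun (fun ω => X ω ^ a) (fun ω => Y ω ^ b) μ :=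
    hXY.comp (measurable_id.pow_const a) (measurable_id.pow_const b)
  have h2 : IndepFun (fun ω => X ω ^ a * Y ω ^ b) (fun ω => W ω ^ c) μ :=
    hXYW.comp (φ := fun p : ℝ × ℝ => p.1 ^ a * p.2 ^ b) (ψ := fun x : ℝ => x ^ c)
      (by fun_prop) (by fun_prop)
  have hXYi : Integrable (fun ω => X ω ^ a * Y ω ^ b) μ := h1.integrable_mul (hiX a) (hiY b)
  refine ⟨h2.integrable_mul hXYi (hiW c), ?_⟩
  have e2 := h2.integral_fun_mul_eq_mul_integral hXYi.aestronglyMeasurable (hiW c).aestronglyMeasurable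
  have e1 := h1.integral_fun_mul_eq_mul_integral (hiX a).aestronglyMeasurable (hiY b).aestronglyMeasurable
  calc ∫ ω, X ω ^ a * Y ω ^ b * W ω ^ c ∂μ
      = (∫ ω, X ω ^ a * Y ω ^ b ∂μ) * ∫ ω, W ω ^ c ∂μ := e2
    _ = (∫ ω, X ω ^ a ∂μ) * (∫ ω, Y ω ^ b ∂μ) * (∫ ω, W ω ^ c ∂μ) := by
        have e1' : (∫ ω, X ω ^ a * Y ω ^ b ∂μ)
            = (∫ ω, X ω ^ a ∂μ) * ∫ ω, Y ω ^ b ∂μ := e1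
        rw [e1']

variable {Ω : Type*} [MeasurableSpace Ω] {μ : Measure Ω} [IsProbabilityMeasure μ]

lemma aux_key
    (X E1 E2 : Ω → ℝ)
    (hprod : ∀ a b c : ℕ, ∫ ω, X ω ^ a * E1 ω ^ b * E2 ω ^ c ∂μ =
      (∫ ω, X ω ^ a ∂μ) * (∫ ω, E1 ω ^ b ∂μ) * (∫ ω, E2 ω ^ c ∂μ))
    (hint : ∀ a b c : ℕ, Integrable (fun ω => X ω ^ a * E1 ω ^ b * E2 ω ^ c) μ)
    (hX0 : ∫ ω, X ω ∂μ = 0) (h01 : ∫ ω, E1 ω ∂μ = 0) (h02 : ∫ ω, E2 ω ∂μ = 0)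
    (n : ℕ) (hn : 3 ≤ n)
    (hmin : ∀ m : ℕ, 3 ≤ m → m < n →
      ∫ ω, X ω ^ m ∂μ = ((m : ℝ) - 1) * (∫ ω, X ω ^ (m - 2) ∂μ) * ∫ ω, X ω ^ 2 ∂μ)
    (a b : ℝ) :
    (∫ ω, (a * X ω + E1 ω) * (b * X ω + E2 ω) ∂μ) = a * b * (∫ ω, X ω ^ 2 ∂μ) ∧
    (∫ ω, (a * X ω + E1 ω) ^ (n-1) * (b * X ω + E2 ω) ∂μ)
      - ((n:ℝ)-1) * (∫ ω, (a * X ω + E1 ω) * (b * X ω + E2 ω) ∂μ)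
        * (∫ ω, (a * X ω + E1 ω) ^ (n-2) ∂μ)
    = b * a ^ (n-1) *
        ((∫ ω, X ω ^ n ∂μ) - ((n:ℝ)-1) * (∫ ω, X ω ^ (n-2) ∂μ) * (∫ ω, X ω ^ 2 ∂μ)) := by
  set U : ℕ → ℝ := fun k => ∫ ω, X ω ^ k ∂μ with hU
  set F : ℕ → ℝ := fun k => ∫ ω, E1 ω ^ k ∂μ with hF
  have hU0 : U 0 = 1 := by simp [hU]
  have hU1 : U 1 = 0 := by simpa [hU] using hX0
  have hF0 : F 0 = 1 := by simp [hF]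
  have hF1 : F 1 = 0 := by simpa [hF] using h01
  -- two-factor versions
  have hint2 : ∀ p q : ℕ, Integrable (fun ω => X ω ^ p * E1 ω ^ q) μ := by
    intro p q; simpa using hint p q 0
  have hprod2 : ∀ p q : ℕ, ∫ ω, X ω ^ p * E1 ω ^ q ∂μ = U p * F q := by
    intro p q
    have := hprod p q 0
    simpa [hU, hF] using this
  have hint3 : ∀ p q : ℕ, Integrable (fun ω => X ω ^ p * E1 ω ^ q * E2 ω) μ := by
    intro p q; simpa using hint p q 1
  have hprod3 : ∀ p q : ℕ, ∫ ω, X ω ^ p * E1 ω ^ q * E2 ω ∂μ = 0 := by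
    intro p q
    have := hprod p q 1
    simpa [h02] using this
  -- expansion of ∫ (aX+E1)^m
  have K2 : ∀ m : ℕ, ∫ ω, (a * X ω + E1 ω) ^ m ∂μ
      = ∑ k ∈ Finset.range (m+1), (m.choose k : ℝ) * a^k * U k * F (m-k) := by
    intro m
    have hfe : (fun ω => (a * X ω + E1 ω) ^ m)
        = fun ω => ∑ k ∈ Finset.range (m+1),
            ((m.choose k : ℝ) * a^k) * (X ω ^ k * E1 ω ^ (m-k)) := by
      funext ω
      rw [add_pow]
      apply Finset.sum_congr rfl
      intro k _
      ring
    rw [hfe, integral_finset_sum _ (fun k _ => (hint2 k (m-k)).const_mul _)]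
    apply Finset.sum_congr rfl
    intro k _
    rw [integral_const_mul, hprod2]
    ring
  -- expansion of ∫ (aX+E1)^m * (bX+E2)
  have K1 : ∀ m : ℕ, ∫ ω, (a * X ω + E1 ω) ^ m * (b * X ω + E2 ω) ∂μ
      = b * ∑ k ∈ Finset.range (m+1), (m.choose k : ℝ) * a^k * U (k+1) * F (m-k) := by
    intro m
    have hfe : (fun ω => (a * X ω + E1 ω) ^ m * (b * X ω + E2 ω))
        = fun ω => ∑ k ∈ Finset.range (m+1),
            (((m.choose k : ℝ) * a^k * b) * (X ω ^ (k+1) * E1 ω ^ (m-k))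
              + ((m.choose k : ℝ) * a^k) * (X ω ^ k * E1 ω ^ (m-k) * E2 ω)) := by
      funext ω
      rw [add_pow, Finset.sum_mul]
      apply Finset.sum_congr rfl
      intro k _
      ring
    rw [hfe, integral_finset_sum _ (fun k _ => by
      exact Integrable.add ((hint2 (k+1) (m-k)).const_mul _) ((hint3 k (m-k)).const_mul _))]
    rw [Finset.mul_sum]
    apply Finset.sum_congr rfl
    intro k _
    rw [integral_add ((hint2 (k+1) (m-k)).const_mul _) ((hint3 k (m-k)).const_mul _),
      integral_const_mul, integral_const_mul, hprod2, hprod3]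
    ring
  -- the value of ∫ (aX+E1)(bX+E2)
  have hDZ : ∫ ω, (a * X ω + E1 ω) * (b * X ω + E2 ω) ∂μ = a * b * U 2 := by
    have h1 := K1 1
    have h1' : ∫ ω, (a * X ω + E1 ω) ^ 1 * (b * X ω + E2 ω) ∂μ
        = ∫ ω, (a * X ω + E1 ω) * (b * X ω + E2 ω) ∂μ := by
      apply integral_congr_ae
      filter_upwards with ω
      rw [pow_one]
    rw [h1'] at h1
    rw [h1, Finset.sum_range_succ, Finset.sum_range_one]
    simp [hU1, hF0, hF1]
    ring
  refine ⟨hDZ, ?_⟩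
  obtain ⟨p, rfl⟩ : ∃ p, n = p + 3 := ⟨n - 3, by omega⟩
  have e1 : p + 3 - 1 = p + 2 := by omega
  have e2 : p + 3 - 2 = p + 1 := by omega
  rw [e1, e2, K1 (p+2), K2 (p+1), hDZ]
  -- now pure algebra with sums
  have hUrec : ∀ k : ℕ, k ≤ p → U (k+2) = ((k:ℝ)+1) * U k * U 2 := by
    intro k hk
    rcases Nat.eq_zero_or_pos k with rfl | hkpos
    · simp [hU0]
    · obtain ⟨j, rfl⟩ : ∃ j, k = j + 1 := ⟨k - 1, by omega⟩
      have hm := hmin (j+3) (by omega) (by omega)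
      have e3 : j + 3 - 2 = j + 1 := by omega
      rw [e3] at hm
      have hu3 : U (j+3) = ((j:ℝ)+3-1) * U (j+1) * U 2 := by
        simp only [hU]
        simpa using hm
      rw [show j + 1 + 2 = j + 3 from by omega, hu3]
      push_cast
      ring
  have key : (∑ k ∈ Finset.range (p+3), ((p+2).choose k : ℝ) * a^k * U (k+1) * F (p+2-k))
      - ((p+2:ℝ)) * (a * U 2) * (∑ k ∈ Finset.range (p+2),
          ((p+1).choose k : ℝ) * a^k * U k * F (p+1-k))
      = a^(p+2) * (U (p+3) - ((p+2:ℝ)) * U (p+1) * U 2) := by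
    rw [Finset.sum_range_succ' _ (p+2)]
    simp only [pow_zero, Nat.choose_zero_right, Nat.cast_one, hU1, mul_zero, zero_mul,
      one_mul, mul_one, add_zero]
    rw [Finset.mul_sum, ← Finset.sum_sub_distrib]
    rw [Finset.sum_range_succ]
    have hzero : ∑ k ∈ Finset.range (p+1),
        (((p+2).choose (k+1) : ℝ) * a^(k+1) * U (k+1+1) * F (p+2-(k+1))
          - ((p:ℝ)+2) * (a * U 2) * (((p+1).choose k : ℝ) * a^k * U k * F (p+1-k))) = 0 := by
      apply Finset.sum_eq_zero
      intro k hk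
      rw [Finset.mem_range] at hk
      have esub : p + 2 - (k+1) = p + 1 - k := by omega
      rw [esub]
      have hkp : k ≤ p := by omega
      have hu := hUrec k hkp
      have hc : (((p+2).choose (k+1) : ℝ)) * ((k:ℝ)+1)
          = ((p:ℝ)+2) * (((p+1).choose k : ℝ)) := by
        have h0 := Nat.add_one_mul_choose_eq (p+1) k
        have h' : (p+2) * ((p+1).choose k) = ((p+2).choose (k+1)) * (k+1) := by
          simpa [Nat.succ_eq_add_one] using h0
        have := congrArg (Nat.cast : ℕ → ℝ) h'.symm
        push_cast at this
        linarith [this]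
      rw [show k + 1 + 1 = k + 2 from rfl, hu]
      linear_combination (a^(k+1) * U k * U 2 * F (p+1-k)) * hc
    rw [hzero, zero_add]
    simp only [Nat.choose_self, Nat.cast_one, Nat.sub_self, hF0,
      show p + 1 + 1 + 1 = p + 3 from rfl, show p + 2 - (p + 1 + 1) = 0 from by omega,
      show p + 1 - (p + 1) = 0 from by omega]
    ring
  push_cast
  calc b * (∑ k ∈ Finset.range (p+2+1), ((p+2).choose k : ℝ) * a^k * U (k+1) * F (p+2-k))
        - ((p:ℝ)+3-1) * (a * b * U 2) * (∑ k ∈ Finset.range (p+1+1),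
            ((p+1).choose k : ℝ) * a^k * U k * F (p+1-k))
      = b * ((∑ k ∈ Finset.range (p+3), ((p+2).choose k : ℝ) * a^k * U (k+1) * F (p+2-k))
          - ((p+2:ℝ)) * (a * U 2) * (∑ k ∈ Finset.range (p+2),
              ((p+1).choose k : ℝ) * a^k * U k * F (p+1-k))) := by
        rw [show p+2+1 = p+3 from rfl, show p+1+1 = p+2 from rfl]
        ring
    _ = b * (a^(p+2) * (U (p+3) - ((p+2:ℝ)) * U (p+1) * U 2)) := by rw [key]
    _ = b * a ^ (p+2) * (U (p+3) - ((p:ℝ)+3-1) * U (p+1) * U 2) := by ring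

end Aux

/-- Theorem 1 (algorithmic form): the ratio α_d/α_z is recovered as
    sign(E[DZ]) · |num/den|^{1/(n−2)}. -/
theorem cross_moment_algorithm
    {Ω : Type*} [MeasurableSpace Ω] {μ : MeasureTheory.Measure Ω}
    [MeasureTheory.IsProbabilityMeasure μ]
    (εu εz εd εy : Ω → ℝ)
    (hmu : Measurable εu) (hmz : Measurable εz) (hmd : Measurable εd) (hmy : Measurable εy)
    (hind : ProbabilityTheory.iIndepFun ![εu, εz, εd, εy] μ)
    (h0u : ∫ ω, εu ω ∂μ = 0) (h0z : ∫ ω, εz ω ∂μ = 0)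
    (h0d : ∫ ω, εd ω ∂μ = 0) (h0y : ∫ ω, εy ω ∂μ = 0)
    (hLu : ∀ n : ℕ, MeasureTheory.MemLp εu n μ) (hLz : ∀ n : ℕ, MeasureTheory.MemLp εz n μ)
    (hLd : ∀ n : ℕ, MeasureTheory.MemLp εd n μ) (hLy : ∀ n : ℕ, MeasureTheory.MemLp εy n μ)
    (αz αd β γ : ℝ) (Z D Y : Ω → ℝ)
    (hZ : ∀ ω, Z ω = αz * εu ω + εz ω)
    (hD : ∀ ω, D ω = αd * εu ω + εd ω)
    (hY : ∀ ω, Y ω = β * D ω + γ * εu ω + εy ω)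
    (hu2 : 0 < ∫ ω, (εu ω) ^ 2 ∂μ)
    (hαd : αd ≠ 0) (hαz : αz ≠ 0)
    (n : ℕ) (hn : 3 ≤ n)
    (hne : ∫ ω, εu ω ^ n ∂μ ≠
      ((n : ℝ) - 1) * (∫ ω, εu ω ^ (n - 2) ∂μ) * ∫ ω, εu ω ^ 2 ∂μ)
    (hmin : ∀ m : ℕ, 3 ≤ m → m < n →
      ∫ ω, εu ω ^ m ∂μ =
        ((m : ℝ) - 1) * (∫ ω, εu ω ^ (m - 2) ∂μ) * ∫ ω, εu ω ^ 2 ∂μ) :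
    αd / αz =
      Real.sign (∫ ω, D ω * Z ω ∂μ) *
        |((∫ ω, D ω ^ (n - 1) * Z ω ∂μ) -
            ((n : ℝ) - 1) * (∫ ω, D ω * Z ω ∂μ) * (∫ ω, D ω ^ (n - 2) ∂μ)) /
          ((∫ ω, Z ω ^ (n - 1) * D ω ∂μ) -
            ((n : ℝ) - 1) * (∫ ω, D ω * Z ω ∂μ) * (∫ ω, Z ω ^ (n - 2) ∂μ))| ^
          ((1 : ℝ) / ((n : ℝ) - 2)) := by
  have hmeas : ∀ i, Measurable (![εu, εz, εd, εy] i) := by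
    intro i; fin_cases i <;> assumption
  -- integrability of powers
  have hiu := aux_int_pow hmu hLu (μ := μ)
  have hiz := aux_int_pow hmz hLz (μ := μ)
  have hid := aux_int_pow hmd hLd (μ := μ)
  -- independence facts
  have hud : ProbabilityTheory.IndepFun εu εd μ := by
    have := hind.indepFun (i := 0) (j := 2) (by decide)
    simpa using this
  have huz : ProbabilityTheory.IndepFun εu εz μ := by
    have := hind.indepFun (i := 0) (j := 1) (by decide)
    simpa using this
  have hudz : ProbabilityTheory.IndepFun (fun ω => (εu ω, εd ω)) εz μ := by
    have := hind.indepFun_prodMk hmeas 0 2 1 (by decide) (by decide)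
    simpa using this
  have huzd : ProbabilityTheory.IndepFun (fun ω => (εu ω, εz ω)) εd μ := by
    have := hind.indepFun_prodMk hmeas 0 1 2 (by decide) (by decide)
    simpa using this
  -- triple product formulas
  have T1 := fun a b c => aux_triple_int hud hudz hiu hid hiz a b c
  have T2 := fun a b c => aux_triple_int huz huzd hiu hiz hid a b c
  -- the two key computations
  have Hnum := aux_key εu εd εz (fun a b c => (T1 a b c).2) (fun a b c => (T1 a b c).1)
    h0u h0d h0z n hn hmin αd αz
  have Hden := aux_key εu εz εd (fun a b c => (T2 a b c).2) (fun a b c => (T2 a b c).1)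
    h0u h0z h0d n hn hmin αz αd
  set κ : ℝ := (∫ ω, εu ω ^ n ∂μ) - ((n:ℝ)-1) * (∫ ω, εu ω ^ (n-2) ∂μ) * (∫ ω, εu ω ^ 2 ∂μ)
    with hκdef
  have hκ : κ ≠ 0 := sub_ne_zero.mpr hne
  -- rewrite goal in terms of εu,εz,εd
  simp only [hD, hZ]
  have hswap : (∫ ω, (αd * εu ω + εd ω) * (αz * εu ω + εz ω) ∂μ)
      = ∫ ω, (αz * εu ω + εz ω) * (αd * εu ω + εd ω) ∂μ := by
    apply MeasureTheory.integral_congr_ae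
    filter_upwards with ω
    ring
  rw [Hnum.2, hswap, Hden.2, Hden.1]
  obtain ⟨p, rfl⟩ : ∃ p, n = p + 3 := ⟨n - 3, by omega⟩
  have e1 : p + 3 - 1 = p + 2 := by omega
  rw [e1]
  have hfrac : αz * αd ^ (p+2) * κ / (αd * αz ^ (p+2) * κ) = (αd/αz)^(p+1) := by
    rw [div_pow, div_eq_div_iff (mul_ne_zero (mul_ne_zero hαd (pow_ne_zero _ hαz)) hκ)
      (pow_ne_zero _ hαz)]
    ring
  rw [hfrac, abs_pow]
  have hcast : ((p+3:ℕ):ℝ) - 2 = ((p+1:ℕ):ℝ) := by push_cast; ring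
  rw [hcast]
  have hrpow : (|αd/αz| ^ (p+1) : ℝ) ^ ((1:ℝ)/((p+1:ℕ):ℝ)) = |αd/αz| := by
    rw [← Real.rpow_natCast |αd/αz| (p+1), ← Real.rpow_mul (abs_nonneg _), mul_one_div,
      div_self (by positivity : ((p+1:ℕ):ℝ) ≠ 0), Real.rpow_one]
  rw [hrpow]
  rcases lt_trichotomy (αd/αz) 0 with hlt | heq | hgt
  · have hmulneg : αz * αd < 0 := by
      rcases div_neg_iff.mp hlt with ⟨h1, h2⟩ | ⟨h1, h2⟩
      · exact mul_neg_of_neg_of_pos h2 h1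
      · exact mul_neg_of_pos_of_neg h2 h1
    rw [Real.sign_of_neg (mul_neg_of_neg_of_pos hmulneg hu2 : αz * αd * (∫ ω, εu ω ^ 2 ∂μ) < 0),
      abs_of_neg hlt]
    ring
  · exact absurd heq (div_ne_zero hαd hαz)
  · have hmulpos : 0 < αz * αd := by
      rcases div_pos_iff.mp hgt with ⟨h1, h2⟩ | ⟨h1, h2⟩
      · exact mul_pos h2 h1
      · exact mul_pos_of_neg_of_neg h2 h1
    rw [Real.sign_of_pos (mul_pos hmulpos hu2 : 0 < αz * αd * (∫ ω, εu ω ^ 2 ∂μ)),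
      abs_of_pos hgt]
    ring
end

section
/- (α_z/k)·(kβ' + γ')·σ_u = α_z·(β + γ)·σ_u. That is, the covariance of the proxy Z and the outcome Y is the same in the constructed second model as in the original model. -/
/-- In the impossibility construction of Theorem 2, Cov(Z,Y) matches:
    (α_z/k)·(kβ' + γ')·σ_u = α_z·(β + γ)·σ_u. -/
theorem cov_ZY_matches
    (αz γ β σu σz σd σy k : ℝ)
    (hαz : αz ≠ 0) (hγ : γ ≠ 0)
    (hσu : 0 < σu) (hσz : 0 < σz) (hσd : 0 < σd) (hσy : 0 ≤ σy)
    (hk0 : 0 < k) (hk1 : k < 1)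
    (hklb : Real.sqrt (αz ^ 2 * σu / (αz ^ 2 * σu + σz)) < k)
    (hkub : 1 - k ^ 2 ≤ σd / σu)
    (σz' σd' β' γ' σy' : ℝ)
    (hσz' : σz' = αz ^ 2 * σu + σz - αz ^ 2 * σu / k ^ 2)
    (hσd' : σd' = (1 - k ^ 2) * σu + σd)
    (hβ' : β' = β + γ * σu * (1 - k ^ 2) / σd')
    (hγ' : γ' = k * γ * σd / σd')
    (hσy' : σy' = (β + γ) ^ 2 * σu + β ^ 2 * σd + σy -
      (k * β' + γ') ^ 2 * σu - β' ^ 2 * σd') :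
    (αz / k) * (k * β' + γ') * σu = αz * (β + γ) * σu := by
  have hk2 : (0:ℝ) < 1 - k ^ 2 := by nlinarith
  have hσd'pos : 0 < σd' := by rw [hσd']; nlinarith
  have h : k * β' + γ' = k * (β + γ) := by
    rw [hβ', hγ', hσd']
    field_simp
    ring
  rw [h]
  field_simp
end

section
/- β'·(σ_u + σ_d) + k·γ'·σ_u = β·(σ_u + σ_d) + γ·σ_u. That is, the covariance of the treatment D and the outcome Y is the same in the constructed second model (where Var(D) = k²σ_u + σ_d' = σ_u + σ_d) as in the original model. -/
lemma one_sub_sq_mul_add_pos {k σu σd : ℝ} (hk0 : 0 < k) (hk1 : k < 1) (hσu : 0 < σu)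
    (hσd : 0 < σd) : 0 < (1 - k ^ 2) * σu + σd := by
  have hk : 0 < 1 - k ^ 2 := by nlinarith
  positivity

-- The γ-terms add up to γ σu ((1 - k²)(σu + σd) + k² σd) / σd', and that numerator is σd'.
lemma shifted_cov_eq {β γ σu σd k σd' : ℝ} (hσd' : σd' = (1 - k ^ 2) * σu + σd)
    (hσd'0 : σd' ≠ 0) :
    (β + γ * σu * (1 - k ^ 2) / σd') * (σu + σd) + k * (k * γ * σd / σd') * σu =
      β * (σu + σd) + γ * σu := by
  have hnum : (1 - k ^ 2) * (σu + σd) + k ^ 2 * σd = σd' := by rw [hσd']; ring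
  field_simp
  linear_combination γ * σu * hnum

theorem cov_DY_matches_general
    (γ β σu σd k : ℝ)
    (hσu : 0 < σu) (hσd : 0 < σd)
    (hk0 : 0 < k) (hk1 : k < 1)
    (σd' β' γ' : ℝ)
    (hσd' : σd' = (1 - k ^ 2) * σu + σd)
    (hβ' : β' = β + γ * σu * (1 - k ^ 2) / σd')
    (hγ' : γ' = k * γ * σd / σd') :
    β' * (σu + σd) + k * γ' * σu = β * (σu + σd) + γ * σu := by
  have hσd'0 : σd' ≠ 0 := hσd' ▸ (one_sub_sq_mul_add_pos hk0 hk1 hσu hσd).ne'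
  rw [hβ', hγ']
  exact shifted_cov_eq hσd' hσd'0

/-- In the impossibility construction of Theorem 2, Cov(D,Y) matches:
    β'·(σ_u + σ_d) + k·γ'·σ_u = β·(σ_u + σ_d) + γ·σ_u. -/
theorem cov_DY_matches
    (αz γ β σu σz σd σy k : ℝ)
    (hαz : αz ≠ 0) (hγ : γ ≠ 0)
    (hσu : 0 < σu) (hσz : 0 < σz) (hσd : 0 < σd) (hσy : 0 ≤ σy)
    (hk0 : 0 < k) (hk1 : k < 1)
    (hklb : Real.sqrt (αz ^ 2 * σu / (αz ^ 2 * σu + σz)) < k)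
    (hkub : 1 - k ^ 2 ≤ σd / σu)
    (σz' σd' β' γ' σy' : ℝ)
    (hσz' : σz' = αz ^ 2 * σu + σz - αz ^ 2 * σu / k ^ 2)
    (hσd' : σd' = (1 - k ^ 2) * σu + σd)
    (hβ' : β' = β + γ * σu * (1 - k ^ 2) / σd')
    (hγ' : γ' = k * γ * σd / σd')
    (hσy' : σy' = (β + γ) ^ 2 * σu + β ^ 2 * σd + σy -
      (k * β' + γ') ^ 2 * σu - β' ^ 2 * σd') :
    β' * (σu + σd) + k * γ' * σu = β * (σu + σd) + γ * σu :=
  cov_DY_matches_general γ β σu σd k hσu hσd hk0 hk1 σd' β' γ' hσd' hβ' hγ'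
end

section
/- (Bias of the DiD estimator in linear SCMs, eq. (7).) Assume E[D²] > 0. Then the DiD estimate β̂ = (E[YD] − E[ZD])/E[D²] satisfies β̂ = β + α_d·(γ − α_z)·E[ε_u²]/E[D²]. Consequently, if α_d ≠ 0 and E[ε_u²] > 0, then β̂ = β if and only if γ = α_z; i.e., the DiD estimator is unbiased exactly when the latent confounder has the same direct causal effect on the pre-treatment and post-treatment outcomes (the common trend condition). -/
/-!
Expand `Y·D` and `Z·D` through the structural equations. Every cross moment of two distinct
noises vanishes, since the two are independent and one of them is centred, so
`E[YD] = β E[D²] + γ α_d E[ε_u²]` and `E[ZD] = α_z α_d E[ε_u²]`; the confounder enters the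
DiD numerator only through `(γ - α_z) α_d E[ε_u²]`.
-/

open MeasureTheory ProbabilityTheory

section SecondMoments

variable {Ω : Type*} [MeasurableSpace Ω] {μ : Measure Ω} {U V W X : Ω → ℝ}

lemma integral_const_mul_add_mul (hU : MemLp U 2 μ) (hV : MemLp V 2 μ) (hX : MemLp X 2 μ)
    (a : ℝ) :
    ∫ ω, (a * U ω + V ω) * X ω ∂μ = a * ∫ ω, U ω * X ω ∂μ + ∫ ω, V ω * X ω ∂μ := by
  have hUX : Integrable (fun ω ↦ U ω * X ω) μ := hU.integrable_mul hX
  have hVX : Integrable (fun ω ↦ V ω * X ω) μ := hV.integrable_mul hX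
  simp_rw [add_mul, mul_assoc]
  rw [integral_add (hUX.const_mul a) hVX, integral_const_mul]

lemma integral_mul_const_mul_add (hU : MemLp U 2 μ) (hV : MemLp V 2 μ) (hX : MemLp X 2 μ)
    (a : ℝ) :
    ∫ ω, X ω * (a * U ω + V ω) ∂μ = a * ∫ ω, X ω * U ω ∂μ + ∫ ω, X ω * V ω ∂μ := by
  simp_rw [mul_comm (X _)]
  exact integral_const_mul_add_mul hU hV hX a

lemma ProbabilityTheory.IndepFun.integral_mul_eq_zero (hWX : W ⟂ᵢ[μ] X)
    (hW : AEStronglyMeasurable W μ) (hX : AEStronglyMeasurable X μ) (hW0 : ∫ ω, W ω ∂μ = 0) :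
    ∫ ω, W ω * X ω ∂μ = 0 := by
  rw [hWX.integral_fun_mul_eq_mul_integral hW hX, hW0, zero_mul]

lemma integral_mul_const_mul_add_eq_zero (hWU : W ⟂ᵢ[μ] U) (hWV : W ⟂ᵢ[μ] V)
    (hW : MemLp W 2 μ) (hU : MemLp U 2 μ) (hV : MemLp V 2 μ) (hW0 : ∫ ω, W ω ∂μ = 0)
    (a : ℝ) :
    ∫ ω, W ω * (a * U ω + V ω) ∂μ = 0 := by
  rw [integral_mul_const_mul_add hU hV hW,
    hWU.integral_mul_eq_zero hW.1 hU.1 hW0, hWV.integral_mul_eq_zero hW.1 hV.1 hW0]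
  ring

lemma integral_mul_const_mul_add_of_indepFun (hVU : V ⟂ᵢ[μ] U) (hU : MemLp U 2 μ)
    (hV : MemLp V 2 μ) (hV0 : ∫ ω, V ω ∂μ = 0) (a : ℝ) :
    ∫ ω, U ω * (a * U ω + V ω) ∂μ = a * ∫ ω, U ω ^ 2 ∂μ := by
  rw [integral_mul_const_mul_add hU hV hU]
  simp_rw [← sq, mul_comm (U _) (V _), hVU.integral_mul_eq_zero hV.1 hU.1 hV0, add_zero]

end SecondMoments

theorem did_bias_general
    {Ω : Type*} [MeasurableSpace Ω] {μ : MeasureTheory.Measure Ω}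
    (εu εz εd εy : Ω → ℝ)
    (hind : ProbabilityTheory.iIndepFun ![εu, εz, εd, εy] μ)
    (h0z : ∫ ω, εz ω ∂μ = 0)
    (h0d : ∫ ω, εd ω ∂μ = 0) (h0y : ∫ ω, εy ω ∂μ = 0)
    (hLu : ∀ n : ℕ, MeasureTheory.MemLp εu n μ) (hLz : ∀ n : ℕ, MeasureTheory.MemLp εz n μ)
    (hLd : ∀ n : ℕ, MeasureTheory.MemLp εd n μ) (hLy : ∀ n : ℕ, MeasureTheory.MemLp εy n μ)
    (αz αd β γ : ℝ) (Z D Y : Ω → ℝ)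
    (hZ : ∀ ω, Z ω = αz * εu ω + εz ω)
    (hD : ∀ ω, D ω = αd * εu ω + εd ω)
    (hY : ∀ ω, Y ω = β * D ω + γ * εu ω + εy ω)
    (hD2 : 0 < ∫ ω, D ω ^ 2 ∂μ) :
    ((∫ ω, Y ω * D ω ∂μ) - ∫ ω, Z ω * D ω ∂μ) / (∫ ω, D ω ^ 2 ∂μ) =
      β + αd * (γ - αz) * (∫ ω, (εu ω) ^ 2 ∂μ) / (∫ ω, D ω ^ 2 ∂μ) ∧
    (αd ≠ 0 → 0 < ∫ ω, (εu ω) ^ 2 ∂μ →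
      (((∫ ω, Y ω * D ω ∂μ) - ∫ ω, Z ω * D ω ∂μ) / (∫ ω, D ω ^ 2 ∂μ) = β ↔
        γ = αz)) := by
  have hu : MemLp εu 2 μ := hLu 2
  have hz : MemLp εz 2 μ := hLz 2
  have hd : MemLp εd 2 μ := hLd 2
  have hy : MemLp εy 2 μ := hLy 2
  have hDL2 : MemLp D 2 μ := by
    rw [show D = fun ω ↦ αd * εu ω + εd ω from funext hD]
    exact (hu.const_mul αd).add hd
  have huD : ∫ ω, εu ω * D ω ∂μ = αd * ∫ ω, εu ω ^ 2 ∂μ := by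
    simp_rw [hD]
    exact integral_mul_const_mul_add_of_indepFun (hind.indepFun (by decide : (2 : Fin 4) ≠ 0))
      hu hd h0d αd
  have hzD : ∫ ω, εz ω * D ω ∂μ = 0 := by
    simp_rw [hD]
    exact integral_mul_const_mul_add_eq_zero (hind.indepFun (by decide : (1 : Fin 4) ≠ 0))
      (hind.indepFun (by decide : (1 : Fin 4) ≠ 2)) hz hu hd h0z αd
  have hyD : ∫ ω, εy ω * D ω ∂μ = 0 := by
    simp_rw [hD]
    exact integral_mul_const_mul_add_eq_zero (hind.indepFun (by decide : (3 : Fin 4) ≠ 0))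
      (hind.indepFun (by decide : (3 : Fin 4) ≠ 2)) hy hu hd h0y αd
  have hZD : ∫ ω, Z ω * D ω ∂μ = αz * αd * ∫ ω, εu ω ^ 2 ∂μ := by
    simp_rw [hZ, integral_const_mul_add_mul hu hz hDL2, huD, hzD]
    ring
  have hYD : ∫ ω, Y ω * D ω ∂μ = β * ∫ ω, D ω ^ 2 ∂μ + γ * αd * ∫ ω, εu ω ^ 2 ∂μ := by
    have huy : MemLp (fun ω ↦ γ * εu ω + εy ω) 2 μ := (hu.const_mul γ).add hy
    simp_rw [hY, add_assoc, integral_const_mul_add_mul hDL2 huy hDL2,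
      integral_const_mul_add_mul hu hy hDL2, huD, hyD, ← sq]
    ring
  have hbias : ((∫ ω, Y ω * D ω ∂μ) - ∫ ω, Z ω * D ω ∂μ) / (∫ ω, D ω ^ 2 ∂μ) =
      β + αd * (γ - αz) * (∫ ω, (εu ω) ^ 2 ∂μ) / (∫ ω, D ω ^ 2 ∂μ) := by
    rw [hYD, hZD]
    field_simp
    ring
  refine ⟨hbias, fun hαd hu2 ↦ ?_⟩
  simp [hbias, hαd, hu2.ne', hD2.ne', sub_eq_zero]

/-- Bias of the DiD estimator in linear SCMs (eq. (7)):
    β̂ = β + α_d(γ − α_z)E[ε_u²]/E[D²]; hence, when α_d ≠ 0 and E[ε_u²] > 0,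
    β̂ = β iff γ = α_z (the common trend condition). -/
theorem did_bias
    {Ω : Type*} [MeasurableSpace Ω] {μ : MeasureTheory.Measure Ω}
    [MeasureTheory.IsProbabilityMeasure μ]
    (εu εz εd εy : Ω → ℝ)
    (hmu : Measurable εu) (hmz : Measurable εz) (hmd : Measurable εd) (hmy : Measurable εy)
    (hind : ProbabilityTheory.iIndepFun ![εu, εz, εd, εy] μ)
    (h0u : ∫ ω, εu ω ∂μ = 0) (h0z : ∫ ω, εz ω ∂μ = 0)
    (h0d : ∫ ω, εd ω ∂μ = 0) (h0y : ∫ ω, εy ω ∂μ = 0)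
    (hLu : ∀ n : ℕ, MeasureTheory.MemLp εu n μ) (hLz : ∀ n : ℕ, MeasureTheory.MemLp εz n μ)
    (hLd : ∀ n : ℕ, MeasureTheory.MemLp εd n μ) (hLy : ∀ n : ℕ, MeasureTheory.MemLp εy n μ)
    (αz αd β γ : ℝ) (Z D Y : Ω → ℝ)
    (hZ : ∀ ω, Z ω = αz * εu ω + εz ω)
    (hD : ∀ ω, D ω = αd * εu ω + εd ω)
    (hY : ∀ ω, Y ω = β * D ω + γ * εu ω + εy ω)
    (hD2 : 0 < ∫ ω, D ω ^ 2 ∂μ) :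
    ((∫ ω, Y ω * D ω ∂μ) - ∫ ω, Z ω * D ω ∂μ) / (∫ ω, D ω ^ 2 ∂μ) =
      β + αd * (γ - αz) * (∫ ω, (εu ω) ^ 2 ∂μ) / (∫ ω, D ω ^ 2 ∂μ) ∧
    (αd ≠ 0 → 0 < ∫ ω, (εu ω) ^ 2 ∂μ →
      (((∫ ω, Y ω * D ω ∂μ) - ∫ ω, Z ω * D ω ∂μ) / (∫ ω, D ω ^ 2 ∂μ) = β ↔
        γ = αz)) :=
  did_bias_general εu εz εd εy hind h0z h0d h0y hLu hLz hLd hLy αz αd β γ Z D Y hZ hD hY hD2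
end
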